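/- arXiv:1610.07253 — 3 statements merged into one kernel-verified Lean document; each statement's English description precedes it below -/
import Mathlib

section
/- Let G be a finite group and H a maximal subgroup of G. Then [H,G] is linearly primitive: there exists a finite-dimensional irreducible complex representation V of G with G_(V^H) = H. -/
/-- `K` is a minimal overgroup of `H` (an atom of the interval `[H,G]`):
`H < K` and nothing lies strictly between `H` and `K`. -/
def IsMinimalOvergroup {G : Type*} [Group G] (H K : Subgroup G) : Prop :=
  H < K ∧ ∀ K' : Subgroup G, H < K' → K' ≤ K → K' = K

/-- The interval `[H,G]` is linearly primitive: there is a finite-dimensional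
irreducible complex representation `V` of `G` such that the pointwise stabilizer
of the fixed-point subspace `V^H` is exactly `H`. -/
def IsLinearlyPrimitive {G : Type*} [Group G] (H : Subgroup G) : Prop :=
  ∃ (V : Type) (_ : AddCommGroup V) (_ : Module ℂ V) (ρ : Representation ℂ G V),
    FiniteDimensional ℂ V ∧ Nontrivial V ∧
    (∀ U : Submodule ℂ V, (∀ g : G, ∀ v ∈ U, ρ g v ∈ U) → U = ⊥ ∨ U = ⊤) ∧
    {g : G | ∀ v : V, (∀ h : G, h ∈ H → ρ h v = v) → ρ g v = v} = (H : Set G)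

/-- The interval `[H,G]` is boolean: order-isomorphic to the lattice of subsets of
a finite set. -/
def IsBooleanInterval {G : Type*} [Group G] (H : Subgroup G) : Prop :=
  ∃ n : ℕ, Nonempty ((Set.Icc H (⊤ : Subgroup G)) ≃o Set (Fin n))

/-!
The permutation representation `ℂ[G ⧸ H]` contains the vector `δ_H`, fixed by `H` but not by `G`.
Representations of a finite group over `ℂ` are semisimple, so splitting such a vector along an
invariant complement and inducting on the dimension yields an irreducible representation `V`
with a vector `v ∈ V^H` not fixed by `G`. The stabilizer of `v` is a proper subgroup containing
the maximal subgroup `H`, hence equals `H`; the pointwise stabilizer of `V^H` lies between `H`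
and the stabilizer of `v`, so it is `H` as well.
-/

universe u

theorem Submodule.apply_eq_self_of_disjoint {R M : Type*} [Ring R] [AddCommGroup M] [Module R M]
    {f : M →ₗ[R] M} {A C : Submodule R M} (hAC : Disjoint A C) (hA : A ≤ A.comap f)
    (hC : C ≤ C.comap f) {a c : M} (ha : a ∈ A) (hc : c ∈ C) (h : f (a + c) = a + c) :
    f a = a ∧ f c = c := by
  have hswap : f a - a = c - f c := by
    rw [sub_eq_sub_iff_add_eq_add, ← map_add, h, add_comm]
  have hzero : f a - a = 0 :=
    Submodule.disjoint_def.mp hAC _ (A.sub_mem (hA ha) ha) (hswap ▸ C.sub_mem hc (hC hc))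
  rw [hzero, eq_comm, sub_eq_zero] at hswap
  exact ⟨sub_eq_zero.mp hzero, hswap.symm⟩

namespace Representation

variable {k G : Type*} {V : Type u} [Field k] [Group G] [AddCommGroup V] [Module k V]

def stabilizer (ρ : Representation k G V) (v : V) : Subgroup G where
  carrier := {g | ρ g v = v}
  mul_mem' {a b} (ha : ρ a v = v) (hb : ρ b v = v) := by
    show ρ (a * b) v = v
    rw [map_mul, Module.End.mul_apply, hb, ha]
  one_mem' := by simp
  inv_mem' {g} (hg : ρ g v = v) := by
    show ρ g⁻¹ v = v
    conv_lhs => rw [← hg, inv_self_apply]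

@[simp]
theorem mem_stabilizer {ρ : Representation k G V} {v : V} {g : G} :
    g ∈ ρ.stabilizer v ↔ ρ g v = v :=
  Iff.rfl

theorem setOf_forall_fixed_eq_of_isCoatom (ρ : Representation k G V) {H : Subgroup G}
    (hH : IsCoatom H) {v : V} (hv : ∀ h ∈ H, ρ h v = v) {g : G} (hg : ρ g v ≠ v) :
    {g : G | ∀ w : V, (∀ h ∈ H, ρ h w = w) → ρ g w = w} = H := by
  have hstab : ρ.stabilizer v = H := by
    refine (hH.le_iff.mp hv).resolve_left fun htop => hg ?_
    exact mem_stabilizer.mp (htop ▸ Subgroup.mem_top g)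
  ext g'
  refine ⟨fun hg' => ?_, fun hg' w hw => hw g' hg'⟩
  exact hstab ▸ mem_stabilizer.mpr (hg' v hv)

theorem IsIrreducible.nontrivial (ρ : Representation k G V) [ρ.IsIrreducible] : Nontrivial V := by
  by_contra hV
  rw [not_nontrivial_iff_subsingleton] at hV
  exact bot_ne_top (α := Subrepresentation ρ) (Subrepresentation.ext (Subsingleton.elim _ _))

instance [Nontrivial V] {ρ : Representation k G V} : Nontrivial (Subrepresentation ρ) := by
  obtain ⟨v, hv⟩ := exists_ne (0 : V)
  refine ⟨⊥, ⊤, fun h => hv ?_⟩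
  exact (h ▸ Submodule.mem_top (R := k) (x := v) : v ∈ (⊥ : Subrepresentation ρ))

variable [Finite G] [NeZero (Nat.card G : k)]

theorem exists_ne_top_fixed_not_fixed_of_not_isIrreducible (ρ : Representation k G V)
    (hρ : ¬ ρ.IsIrreducible) {H : Subgroup G} {v : V} (hv : ∀ h ∈ H, ρ h v = v) {g : G}
    (hg : ρ g v ≠ v) :
    ∃ σ : Subrepresentation ρ, σ ≠ ⊤ ∧ ∃ u ∈ σ, (∀ h ∈ H, ρ h u = u) ∧ ρ g u ≠ u := by
  have : Nontrivial V := nontrivial_of_ne v 0 fun h => hg (by rw [h, map_zero])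
  obtain ⟨τ, hτ_bot, hτ_top⟩ : ∃ τ : Subrepresentation ρ, τ ≠ ⊥ ∧ τ ≠ ⊤ := by
    by_contra! h
    exact hρ ⟨fun τ => or_iff_not_imp_left.mpr (h τ)⟩
  obtain ⟨C, hτC⟩ := exists_isCompl τ
  have hvτC : v ∈ τ.toSubmodule ⊔ C.toSubmodule := by
    rw [← Subrepresentation.toSubmodule_sup, hτC.sup_eq_top]
    exact Submodule.mem_top
  obtain ⟨a, ha, c, hc, rfl⟩ := Submodule.mem_sup.mp hvτC
  have hsplit : ∀ h : G, ρ h (a + c) = a + c → ρ h a = a ∧ ρ h c = c := fun h =>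
    Submodule.apply_eq_self_of_disjoint
      (disjoint_iff.mpr (congrArg Subrepresentation.toSubmodule (disjoint_iff.mp hτC.disjoint)))
      (τ.apply_mem_toSubmodule h) (C.apply_mem_toSubmodule h) ha hc
  by_cases hga : ρ g a = a
  · refine ⟨C, fun hC => hτ_bot (eq_bot_of_isCompl_top (hC ▸ hτC)), c, hc,
      fun h hh => (hsplit h (hv h hh)).2, fun hgc => hg ?_⟩
    rw [map_add, hga, hgc]
  · exact ⟨τ, hτ_top, a, ha, fun h hh => (hsplit h (hv h hh)).1, hga⟩

theorem exists_isIrreducible_fixed_not_fixed [FiniteDimensional k V] (ρ : Representation k G V)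
    (H : Subgroup G) {v : V} (hv : ∀ h ∈ H, ρ h v = v) {g : G} (hg : ρ g v ≠ v) :
    ∃ (W : Type u) (_ : AddCommGroup W) (_ : Module k W) (π : Representation k G W),
      FiniteDimensional k W ∧ π.IsIrreducible ∧
        ∃ w : W, (∀ h ∈ H, π h w = w) ∧ ∃ g : G, π g w ≠ w := by
  induction hn : Module.finrank k V using Nat.strong_induction_on generalizing V with
  | _ n ih =>
  by_cases hρ : ρ.IsIrreducible
  · exact ⟨V, _, _, ρ, inferInstance, hρ, v, hv, g, hg⟩
  obtain ⟨σ, hσ, u, hu, huH, hgu⟩ :=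
    ρ.exists_ne_top_fixed_not_fixed_of_not_isIrreducible hρ hv hg
  have hlt : Module.finrank k σ.toSubmodule < n :=
    hn ▸ Submodule.finrank_lt fun h => hσ (Subrepresentation.toSubmodule_injective h)
  exact ih _ hlt σ.toRepresentation (v := ⟨u, hu⟩) (fun h hh => Subtype.ext (huH h hh))
    (fun h => hgu (congrArg Subtype.val h)) rfl

end Representation

theorem Representation.ofMulAction_single_eq_self_iff {k G X : Type*} [Semiring k] [Nontrivial k]
    [Monoid G] [MulAction G X] {g : G} {x : X} :
    Representation.ofMulAction k G X g (MonoidAlgebra.single x 1) = MonoidAlgebra.single x 1 ↔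
      g • x = x := by
  rw [Representation.ofMulAction_single, MonoidAlgebra.single_left_inj one_ne_zero]

theorem isLinearlyPrimitive_of_isIrreducible {G : Type*} [Group G] {H : Subgroup G} {V : Type}
    [AddCommGroup V] [Module ℂ V] [FiniteDimensional ℂ V] (ρ : Representation ℂ G V)
    [ρ.IsIrreducible] (hρ : {g : G | ∀ v : V, (∀ h ∈ H, ρ h v = v) → ρ g v = v} = H) :
    IsLinearlyPrimitive H := by
  refine ⟨V, _, _, ρ, inferInstance, Representation.IsIrreducible.nontrivial ρ,
    fun U hU => ?_, hρ⟩
  rcases IsSimpleOrder.eq_bot_or_eq_top (⟨U, hU⟩ : Subrepresentation ρ) with h | h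
  · exact .inl (congrArg Subrepresentation.toSubmodule h)
  · exact .inr (congrArg Subrepresentation.toSubmodule h)

open Representation in
theorem isLinearlyPrimitive_stabilizer {G : Type*} [Group G] [Finite G] {X : Type} [MulAction G X]
    [Finite X] (x : X) (hx : IsCoatom (MulAction.stabilizer G x)) :
    IsLinearlyPrimitive (MulAction.stabilizer G x) := by
  obtain ⟨g, hg⟩ : ∃ g : G, g • x ≠ x := by
    by_contra! h
    exact hx.1 (eq_top_iff.mpr fun g _ => h g)
  obtain ⟨W, _, _, π, _, hπ, w, hwH, g', hg'w⟩ :=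
    (ofMulAction ℂ G X).exists_isIrreducible_fixed_not_fixed (MulAction.stabilizer G x)
      (v := MonoidAlgebra.single x 1) (fun _ hh => ofMulAction_single_eq_self_iff.mpr hh)
      (g := g) (ofMulAction_single_eq_self_iff.not.mpr hg)
  exact isLinearlyPrimitive_of_isIrreducible π (π.setOf_forall_fixed_eq_of_isCoatom hx hwH hg'w)

/-- If `H` is a maximal subgroup of the finite group `G`, then `[H,G]` is
linearly primitive. -/
theorem maximal_subgroup_linearly_primitive {G : Type*} [Group G] [Finite G]
    (H : Subgroup G) (hmax : IsCoatom H) :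
    IsLinearlyPrimitive H := by
  -- `IsLinearlyPrimitive` asks for `V : Type`, so `G` permutes a copy of `G ⧸ H` in `Type`.
  let e := (Finite.equivFin (G ⧸ H)).symm
  let _ := e.mulAction G
  have hstab : MulAction.stabilizer G (e.symm (QuotientGroup.mk 1)) = H := by
    ext g
    refine Iff.trans ?_ (Subgroup.ext_iff.mp (MulAction.stabilizer_quotient H) g)
    show e.symm (g • e (e.symm _)) = _ ↔ g • _ = _
    rw [Equiv.apply_symm_apply, e.symm.injective.eq_iff]
  have := isLinearlyPrimitive_stabilizer (e.symm (QuotientGroup.mk 1)) (by rwa [hstab])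
  rwa [hstab] at this
end

section
/- Let [H,G] be a boolean interval of finite groups of rank 2 with atoms K and L. Then |K:H| = 2 if and only if |G:L| = 2. -/
/-! A subgroup of index two is normal. If `|G:L| = 2`, then `L` is normal, so
`|G:L| = |KL:L| = |K:K ∩ L| = |K:H|`. Conversely, if `|K:H| = 2`, then `K` normalizes `H`.
Conjugation by `x ∈ K` therefore permutes `[H,G] = {H, K, L, G}` and fixes `H`, `K` and `G`,
so it also fixes `L`. Hence `L` is normalized by `K ⊔ L = G`, and we are back in the first case. -/

open Pointwise

theorem MulAction.smul_eq_self_of_smul_mem_insert {M α : Type*} [Group M] [MulAction M α]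
    {g : M} {a : α} {s : Set α} (hs : ∀ b ∈ s, g • b = b) (ha : a ∉ s)
    (hga : g • a ∈ insert a s) : g • a = a := by
  rcases hga with h | hb
  · exact h
  · have hab : a = g • a := MulAction.injective g (hs _ hb).symm
    rw [← hab] at hb
    exact absurd hb ha

namespace Subgroup

variable {G : Type*} [Group G]

theorem index_eq_relIndex_of_sup_eq_top {K L : Subgroup G} [L.Normal] (h : K ⊔ L = ⊤) :
    L.index = L.relIndex K := by
  rw [← relIndex_top_right, ← h, relIndex_sup_right]

theorem le_normalizer_of_relIndex_eq_two {H K : Subgroup G} (hHK : H ≤ K)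
    (h : H.relIndex K = 2) : K ≤ normalizer H :=
  (normal_subgroupOf_iff_le_normalizer hHK).mp (normal_of_index_eq_two h)

theorem normal_of_Icc_eq_of_le_normalizer {H K L : Subgroup G}
    (hset : Set.Icc H ⊤ = {H, K, L, ⊤}) (hKL : K ≠ L) (hHL : H < L) (hLtop : L ≠ ⊤)
    (hjoin : K ⊔ L = ⊤) (hK : K ≤ normalizer H) : L.Normal := by
  rw [← normalizer_eq_top_iff, eq_top_iff, ← hjoin, sup_le_iff]
  refine ⟨fun x hx => ?_, le_normalizer⟩
  have hfix : ∀ M ∈ ({H, K, ⊤} : Set (Subgroup G)), ConjAct.toConjAct x • M = M := by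
    rintro M (rfl | rfl | rfl) <;> apply conjAct_pointwise_smul_eq_self
    exacts [hK hx, le_normalizer hx, le_normalizer (mem_top x)]
  have hmem : ConjAct.toConjAct x • L ∈ Set.Icc H ⊤ :=
    ⟨hfix H (by simp) ▸ pointwise_smul_le_pointwise_smul_iff.mpr hHL.le, le_top⟩
  rw [hset, Set.insert_comm K, Set.insert_comm H] at hmem
  rw [← conjAct_pointwise_smul_iff]
  refine MulAction.smul_eq_self_of_smul_mem_insert hfix ?_ hmem
  simp only [Set.mem_insert_iff, Set.mem_singleton_iff, not_or]
  exact ⟨hHL.ne', hKL.symm, hLtop⟩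

end Subgroup

theorem rank_two_boolean_index_two_iff_general {G : Type*} [Group G]
    (H K L : Subgroup G)
    (hKL : K ≠ L) (hHK : H < K) (hHL : H < L) (hLtop : L ≠ ⊤)
    (hmeet : K ⊓ L = H) (hjoin : K ⊔ L = ⊤)
    (hset : Set.Icc H (⊤ : Subgroup G) = {H, K, L, ⊤}) :
    H.relIndex K = 2 ↔ L.index = 2 := by
  have hindex : L.Normal → L.index = H.relIndex K := fun _ => by
    rw [Subgroup.index_eq_relIndex_of_sup_eq_top hjoin, ← Subgroup.inf_relIndex_left, hmeet]
  constructor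
  · intro h2
    have hL : L.Normal := Subgroup.normal_of_Icc_eq_of_le_normalizer hset hKL hHL hLtop hjoin
      (Subgroup.le_normalizer_of_relIndex_eq_two hHK.le h2)
    rw [hindex hL, h2]
  · intro h2
    rw [← hindex (Subgroup.normal_of_index_eq_two h2), h2]

/-- In a rank `2` boolean interval `[H,G]` with atoms `K` and `L`:
`|K:H| = 2 ↔ |G:L| = 2`. -/
theorem rank_two_boolean_index_two_iff {G : Type*} [Group G] [Finite G]
    (H K L : Subgroup G)
    (hKL : K ≠ L) (hHK : H < K) (hHL : H < L) (hKtop : K ≠ ⊤) (hLtop : L ≠ ⊤)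
    (hmeet : K ⊓ L = H) (hjoin : K ⊔ L = ⊤)
    (hset : Set.Icc H (⊤ : Subgroup G) = {H, K, L, ⊤}) :
    H.relIndex K = 2 ↔ L.index = 2 :=
  rank_two_boolean_index_two_iff_general H K L hKL hHK hHL hLtop hmeet hjoin hset
end

section
/- Let [H,G] be a boolean interval of finite groups such that for every atom A and every K ∈ [H, A^∁] one has |⟨K, A⟩ : K| = |A : H|. Then the dual Euler totient satisfies φ̂(H,G) = ∏_{i=1}^n (|A_i : H| - 1) > 0, where A_1, ..., A_n are the atoms of [H,G]. -/
/-- The dual Euler totient of a boolean interval `[H,G]`, computed via an order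
isomorphism `e` with the boolean lattice of subsets of `Fin n`:
`φ̂(H,G) = ∑_{K ∈ [H,G]} (-1)^{ℓ(H,K)} |G:K|`, where the rank `ℓ(H,K)` of the
boolean interval `[H,K]` is the cardinality of `e K`. -/
noncomputable def dualEulerTotient {G : Type*} [Group G] (H : Subgroup G) {n : ℕ}
    (e : (Set.Icc H (⊤ : Subgroup G)) ≃o Set (Fin n)) : ℤ :=
  ∑ᶠ K : (Set.Icc H (⊤ : Subgroup G)),
    (-1 : ℤ) ^ ((e K).ncard) * ((K : Subgroup G).index : ℤ)

namespace OrderIso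

section Lattice
variable {α β : Type*} [Lattice α] [Lattice β] {a b : α} (e : Set.Icc a b ≃o β)

lemma coe_symm_sup (x y : β) :
    ((e.symm (x ⊔ y) : Set.Icc a b) : α) =
      ((e.symm x : Set.Icc a b) : α) ⊔ ((e.symm y : Set.Icc a b) : α) :=
  congrArg Subtype.val (e.symm.map_sup x y)

lemma coe_symm_inf (x y : β) :
    ((e.symm (x ⊓ y) : Set.Icc a b) : α) =
      ((e.symm x : Set.Icc a b) : α) ⊓ ((e.symm y : Set.Icc a b) : α) :=
  congrArg Subtype.val (e.symm.map_inf x y)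

end Lattice

section PartialOrder
variable {α β : Type*} [PartialOrder α] [PartialOrder β] {a b : α} (e : Set.Icc a b ≃o β)

lemma coe_symm_bot [OrderBot β] : ((e.symm ⊥ : Set.Icc a b) : α) = a := by
  have hab : a ≤ b := (e.symm ⊥).2.1.trans (e.symm ⊥).2.2
  have : e.symm ⊥ ≤ ⟨a, le_rfl, hab⟩ := e.symm_apply_le.2 bot_le
  exact le_antisymm this (e.symm ⊥).2.1

lemma coe_symm_top [OrderTop β] : ((e.symm ⊤ : Set.Icc a b) : α) = b := by
  have hab : a ≤ b := (e.symm ⊤).2.1.trans (e.symm ⊤).2.2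
  have : ⟨b, hab, le_rfl⟩ ≤ e.symm ⊤ := e.le_symm_apply.2 le_top
  exact le_antisymm (e.symm ⊤).2.2 this

lemma covBy_coe_symm_iff [OrderBot β] {y : β} :
    a ⋖ ((e.symm y : Set.Icc a b) : α) ↔ ⊥ ⋖ y := by
  have hIcc : (Set.range (OrderEmbedding.subtype (· ∈ Set.Icc a b))).OrdConnected := by
    rw [OrderEmbedding.coe_subtype, Subtype.range_coe]; exact Set.ordConnected_Icc
  calc a ⋖ ((e.symm y : Set.Icc a b) : α)
      ↔ ((e.symm ⊥ : Set.Icc a b) : α) ⋖ e.symm y := by rw [e.coe_symm_bot]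
    _ ↔ e.symm ⊥ ⋖ e.symm y := hIcc.apply_covBy_apply_iff (a := e.symm ⊥) (b := e.symm y) _
    _ ↔ ⊥ ⋖ y := apply_covBy_apply_iff e.symm

lemma covBy_coe_symm_singleton {ι : Type*} (e : Set.Icc a b ≃o Set ι) (i : ι) :
    a ⋖ ((e.symm {i} : Set.Icc a b) : α) :=
  e.covBy_coe_symm_iff.2 (Set.empty_covBy_singleton i)

lemma setOf_covBy_eq_range [OrderTop α] {ι : Type*} (e : Set.Icc a (⊤ : α) ≃o Set ι) :
    {x | a ⋖ x} = Set.range fun i => ((e.symm {i} : Set.Icc a ⊤) : α) := by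
  ext x
  constructor
  · intro hx
    have hx' : a ⋖ ((e.symm (e ⟨x, hx.le, le_top⟩) : Set.Icc a ⊤) : α) := by
      rwa [e.symm_apply_apply]
    obtain ⟨i, -, hi⟩ := Set.covBy_iff_exists_insert.1 (e.covBy_coe_symm_iff.1 hx')
    have hi' : {i} = e ⟨x, hx.le, le_top⟩ := by simpa using hi
    exact ⟨i, by simp only [hi', e.symm_apply_apply]⟩
  · rintro ⟨i, rfl⟩
    exact e.covBy_coe_symm_singleton i

lemma coe_symm_singleton_injective {ι : Type*} (e : Set.Icc a b ≃o Set ι) :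
    Function.Injective fun i => ((e.symm {i} : Set.Icc a b) : α) :=
  Subtype.val_injective.comp (e.symm.injective.comp Set.singleton_injective)

end PartialOrder

end OrderIso

lemma isMinimalOvergroup_iff_covBy {G : Type*} [Group G] {H K : Subgroup G} :
    IsMinimalOvergroup H K ↔ H ⋖ K := by
  refine and_congr_right fun hHK => forall_congr' fun L => imp_congr_right fun hHL => ?_
  exact ⟨fun h hLK => hLK.ne (h hLK.le), fun h hLK => hLK.eq_of_not_lt h⟩

lemma Subgroup.one_lt_relIndex_of_lt {G : Type*} [Group G] {H K : Subgroup G}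
    [Finite K] (h : H < K) : 1 < H.relIndex K := by
  have h0 : H.relIndex K ≠ 0 := Subgroup.index_ne_zero_of_finite
  have h1 : H.relIndex K ≠ 1 := fun h1 => h.not_ge (Subgroup.relIndex_eq_one.1 h1)
  omega

section BooleanInterval
variable {G : Type*} [Group G] {H : Subgroup G} {n : ℕ}
  (e : Set.Icc H (⊤ : Subgroup G) ≃o Set (Fin n))

lemma dualEulerTotient_eq_sum_finset :
    dualEulerTotient H e =
      ∑ s : Finset (Fin n),
        (-1 : ℤ) ^ s.card * ((e.symm ↑s : Set.Icc H ⊤) : Subgroup G).index := by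
  rw [dualEulerTotient, ← finsum_comp_equiv (Fintype.finsetEquivSet.trans e.symm.toEquiv),
    finsum_eq_sum_of_fintype]
  refine Finset.sum_congr rfl fun s _ => ?_
  simp

lemma index_symm_compl_eq_prod
    (hsplit : ∀ A Ac : Subgroup G, IsMinimalOvergroup H A → H ≤ Ac →
      A ⊓ Ac = H → A ⊔ Ac = ⊤ →
      ∀ K : Subgroup G, H ≤ K → K ≤ Ac → K.relIndex (K ⊔ A) = H.relIndex A)
    (T : Finset (Fin n)) :
    ((e.symm (↑T)ᶜ : Set.Icc H ⊤) : Subgroup G).index =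
      ∏ i ∈ T, H.relIndex ((e.symm {i} : Set.Icc H ⊤) : Subgroup G) := by
  classical
  induction T using Finset.induction_on with
  | empty => simp [← Set.top_eq_univ, e.coe_symm_top]
  | @insert i T hiT ih =>
    have hKA : ((e.symm (↑(insert i T))ᶜ : Set.Icc H ⊤) : Subgroup G) ⊔
        (e.symm {i} : Set.Icc H ⊤) = (e.symm (↑T)ᶜ : Set.Icc H ⊤) := by
      rw [← e.coe_symm_sup]
      congr 3
      ext j
      by_cases hj : j = i <;> simp [hj, hiT]
    have hatom : IsMinimalOvergroup H (e.symm {i} : Set.Icc H ⊤) :=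
      isMinimalOvergroup_iff_covBy.2 (e.covBy_coe_symm_singleton i)
    have hinf :
        ((e.symm {i} : Set.Icc H ⊤) : Subgroup G) ⊓ (e.symm {i}ᶜ : Set.Icc H ⊤) = H := by
      rw [← e.coe_symm_inf, inf_compl_eq_bot, e.coe_symm_bot]
    have hsup :
        ((e.symm {i} : Set.Icc H ⊤) : Subgroup G) ⊔ (e.symm {i}ᶜ : Set.Icc H ⊤) = ⊤ := by
      rw [← e.coe_symm_sup, sup_compl_eq_top, e.coe_symm_top]
    have hle : ((e.symm (↑(insert i T))ᶜ : Set.Icc H ⊤) : Subgroup G) ≤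
        (e.symm {i}ᶜ : Set.Icc H ⊤) :=
      e.symm.monotone (by simp)
    have hrel := hsplit _ _ hatom (e.symm _).2.1 hinf hsup _ (e.symm _).2.1 hle
    rw [Finset.prod_insert hiT, ← ih, ← hKA, ← hrel, Subgroup.relIndex_mul_index le_sup_left]

lemma dualEulerTotient_eq_prod
    (hsplit : ∀ A Ac : Subgroup G, IsMinimalOvergroup H A → H ≤ Ac →
      A ⊓ Ac = H → A ⊔ Ac = ⊤ →
      ∀ K : Subgroup G, H ≤ K → K ≤ Ac → K.relIndex (K ⊔ A) = H.relIndex A) :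
    dualEulerTotient H e =
      ∏ i, ((H.relIndex ((e.symm {i} : Set.Icc H ⊤) : Subgroup G) : ℤ) - 1) := by
  classical
  rw [dualEulerTotient_eq_sum_finset, Finset.prod_sub, Finset.powerset_univ]
  refine Finset.sum_congr rfl fun s _ => ?_
  have hs : (s : Set (Fin n)) = (↑sᶜ)ᶜ := by rw [Finset.coe_compl, compl_compl]
  rw [hs, index_symm_compl_eq_prod e hsplit, Finset.prod_const_one, mul_one,
    Finset.compl_eq_univ_sdiff, Nat.cast_prod]

end BooleanInterval

/-- If in a boolean interval `[H,G]` every atom `A` satisfies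
`|⟨K,A⟩ : K| = |A:H|` for all `K ∈ [H, A^∁]`, then the dual Euler totient equals
`∏ᵢ (|Aᵢ:H| - 1) > 0`, the product being over the atoms of `[H,G]`. -/
theorem dual_euler_totient_product_formula {G : Type*} [Group G] [Finite G]
    (H : Subgroup G) (n : ℕ)
    (e : (Set.Icc H (⊤ : Subgroup G)) ≃o Set (Fin n))
    (hsplit : ∀ A Ac : Subgroup G, IsMinimalOvergroup H A → H ≤ Ac →
      A ⊓ Ac = H → A ⊔ Ac = ⊤ →
      ∀ K : Subgroup G, H ≤ K → K ≤ Ac → K.relIndex (K ⊔ A) = H.relIndex A) :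
    dualEulerTotient H e =
      ∏ᶠ A ∈ {A : Subgroup G | IsMinimalOvergroup H A}, ((H.relIndex A : ℤ) - 1) ∧
    0 < dualEulerTotient H e := by
  have hatoms : {A : Subgroup G | IsMinimalOvergroup H A} =
      Set.range fun i => ((e.symm {i} : Set.Icc H ⊤) : Subgroup G) := by
    simp_rw [isMinimalOvergroup_iff_covBy]
    exact e.setOf_covBy_eq_range
  have hprod : ∏ᶠ A ∈ {A : Subgroup G | IsMinimalOvergroup H A}, ((H.relIndex A : ℤ) - 1) =
      ∏ i, ((H.relIndex ((e.symm {i} : Set.Icc H ⊤) : Subgroup G) : ℤ) - 1) := by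
    rw [hatoms, finprod_mem_range e.coe_symm_singleton_injective, finprod_eq_prod_of_fintype]
  have hpos : 0 < ∏ i, ((H.relIndex ((e.symm {i} : Set.Icc H ⊤) : Subgroup G) : ℤ) - 1) := by
    refine Finset.prod_pos fun i _ => ?_
    have := Subgroup.one_lt_relIndex_of_lt (e.covBy_coe_symm_singleton i).lt
    omega
  rw [dualEulerTotient_eq_prod e hsplit, hprod]
  exact ⟨rfl, hpos⟩
end
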